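/- Suppose g satisfies ‖g(x) - g(x*) - g'(x*)(x - x*)‖ ≤ L‖x - x*‖² near x*, where g(x*) = x*. Then for points x⁰,...,xᵐ near x* and weights ν with Σνᵢ = 1, |νᵢ| ≤ B, x̂ = Σνᵢxⁱ, ĝ = Σνᵢg(xⁱ): ‖g(x̂) - ĝ‖ ≤ L‖x̂ - x*‖² + B·L·Σᵢ ‖xⁱ - x*‖², and moreover ‖x̂ - x*‖² ≤ (m+1)B² Σᵢ ‖xⁱ - x*‖². -/

import Mathlib

open Finset

section AffineCombination

variable {R E F M ι : Type*} [Ring R] [AddCommGroup E] [Module R E] [AddCommGroup F] [Module R F]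
  [Fintype ι]

theorem sum_smul_sub_eq_sum_smul_sub_of_sum_eq_one {ν : ι → R} (hν : ∑ i, ν i = 1)
    (x : ι → E) (c : E) : ∑ i, ν i • x i - c = ∑ i, ν i • (x i - c) := by
  simp only [smul_sub, sum_sub_distrib, ← sum_smul, hν, one_smul]

/-- The affine part `g c + A (y - c)` of `g` commutes with affine combinations, so only the
remainders of the first-order expansion at `c` survive. -/
theorem sub_sum_smul_eq_remainder_sub_sum_smul_remainder [FunLike M E F]
    [LinearMapClass M R E F] (g : E → F) (A : M) (c : E) (x : ι → E) {ν : ι → R}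
    (hν : ∑ i, ν i = 1) :
    g (∑ i, ν i • x i) - ∑ i, ν i • g (x i) =
      (g (∑ i, ν i • x i) - g c - A (∑ i, ν i • x i - c)) -
        ∑ i, ν i • (g (x i) - g c - A (x i - c)) := by
  have hA : A (∑ i, ν i • x i - c) = ∑ i, ν i • A (x i - c) := by
    rw [sum_smul_sub_eq_sum_smul_sub_of_sum_eq_one hν, map_sum]
    simp only [map_smul]
  rw [hA]
  simp only [smul_sub, sum_sub_distrib, ← sum_smul, hν, one_smul]
  abel

end AffineCombination

section NormBounds

variable {E ι : Type*} [SeminormedAddCommGroup E] [NormedSpace ℝ E] [Fintype ι]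
  {ν : ι → ℝ} {B : ℝ}

theorem norm_sum_smul_le_mul_sum (hB : ∀ i, |ν i| ≤ B) {v : ι → E} {w : ι → ℝ}
    (hvw : ∀ i, ‖v i‖ ≤ w i) : ‖∑ i, ν i • v i‖ ≤ B * ∑ i, w i := by
  rw [mul_sum]
  refine (norm_sum_le _ _).trans (sum_le_sum fun i _ => ?_)
  rw [norm_smul, Real.norm_eq_abs]
  exact mul_le_mul (hB i) (hvw i) (norm_nonneg _) ((abs_nonneg _).trans (hB i))

theorem sq_norm_sum_smul_le (hB : ∀ i, |ν i| ≤ B) (v : ι → E) :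
    ‖∑ i, ν i • v i‖ ^ 2 ≤ Fintype.card ι * B ^ 2 * ∑ i, ‖v i‖ ^ 2 := by
  have hsum : ‖∑ i, ν i • v i‖ ≤ B * ∑ i, ‖v i‖ :=
    norm_sum_smul_le_mul_sum hB fun i => le_rfl
  calc ‖∑ i, ν i • v i‖ ^ 2 ≤ (B * ∑ i, ‖v i‖) ^ 2 :=
        pow_le_pow_left₀ (norm_nonneg _) hsum 2
    _ = B ^ 2 * (∑ i, ‖v i‖) ^ 2 := by ring
    _ ≤ B ^ 2 * (Fintype.card ι * ∑ i, ‖v i‖ ^ 2) :=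
        mul_le_mul_of_nonneg_left (sq_sum_le_card_mul_sum_sq ..) (sq_nonneg B)
    _ = Fintype.card ι * B ^ 2 * ∑ i, ‖v i‖ ^ 2 := by ring

end NormBounds

theorem norm_sub_sum_smul_le_of_quadratic_remainder {E F ι : Type*} [SeminormedAddCommGroup E]
    [NormedSpace ℝ E] [SeminormedAddCommGroup F] [NormedSpace ℝ F] [Fintype ι]
    (g : E → F) (A : E →L[ℝ] F) (c : E) (s : Set E) (L B : ℝ)
    (hquad : ∀ y ∈ s, ‖g y - g c - A (y - c)‖ ≤ L * ‖y - c‖ ^ 2)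
    {x : ι → E} (hx : ∀ i, x i ∈ s) {ν : ι → ℝ} (hν : ∑ i, ν i = 1) (hB : ∀ i, |ν i| ≤ B)
    (hxhat : ∑ i, ν i • x i ∈ s) :
    ‖g (∑ i, ν i • x i) - ∑ i, ν i • g (x i)‖ ≤
      L * ‖∑ i, ν i • x i - c‖ ^ 2 + B * L * ∑ i, ‖x i - c‖ ^ 2 := by
  rw [sub_sum_smul_eq_remainder_sub_sum_smul_remainder g A c x hν, mul_assoc, mul_sum]
  exact (norm_sub_le _ _).trans
    (add_le_add (hquad _ hxhat) (norm_sum_smul_le_mul_sum hB fun i => hquad _ (hx i)))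

theorem stmt_14_general (n m : ℕ)
    (g : EuclideanSpace ℝ (Fin n) → EuclideanSpace ℝ (Fin n))
    (xstar : EuclideanSpace ℝ (Fin n))
    (A : EuclideanSpace ℝ (Fin n) →L[ℝ] EuclideanSpace ℝ (Fin n))
    (L B R : ℝ)
    (hquad : ∀ y ∈ Metric.ball xstar R,
      ‖g y - g xstar - A (y - xstar)‖ ≤ L * ‖y - xstar‖ ^ 2)
    (x : Fin (m + 1) → EuclideanSpace ℝ (Fin n))
    (hx : ∀ i, x i ∈ Metric.ball xstar R)
    (ν : Fin (m + 1) → ℝ) (hν : ∑ i, ν i = 1) (hB : ∀ i, |ν i| ≤ B)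
    (hxhat : (∑ i, ν i • x i) ∈ Metric.ball xstar R) :
    ‖g (∑ i, ν i • x i) - ∑ i, ν i • g (x i)‖ ≤
        L * ‖(∑ i, ν i • x i) - xstar‖ ^ 2 + B * L * ∑ i, ‖x i - xstar‖ ^ 2 ∧
      ‖(∑ i, ν i • x i) - xstar‖ ^ 2 ≤ (m + 1) * B ^ 2 * ∑ i, ‖x i - xstar‖ ^ 2 := by
  refine ⟨norm_sub_sum_smul_le_of_quadratic_remainder g A xstar _ L B hquad hx hν hB hxhat, ?_⟩
  have h := sq_norm_sum_smul_le hB (fun i => x i - xstar)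
  rwa [← sum_smul_sub_eq_sum_smul_sub_of_sum_eq_one hν, Fintype.card_fin, Nat.cast_add_one] at h

theorem stmt_14 (n m : ℕ)
    (g : EuclideanSpace ℝ (Fin n) → EuclideanSpace ℝ (Fin n))
    (xstar : EuclideanSpace ℝ (Fin n)) (hfix : g xstar = xstar)
    (A : EuclideanSpace ℝ (Fin n) →L[ℝ] EuclideanSpace ℝ (Fin n))
    (L B R : ℝ) (hL : 0 ≤ L) (hR : 0 < R)
    (hquad : ∀ y ∈ Metric.ball xstar R,
      ‖g y - g xstar - A (y - xstar)‖ ≤ L * ‖y - xstar‖ ^ 2)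
    (x : Fin (m + 1) → EuclideanSpace ℝ (Fin n))
    (hx : ∀ i, x i ∈ Metric.ball xstar R)
    (ν : Fin (m + 1) → ℝ) (hν : ∑ i, ν i = 1) (hB : ∀ i, |ν i| ≤ B)
    (hxhat : (∑ i, ν i • x i) ∈ Metric.ball xstar R) :
    ‖g (∑ i, ν i • x i) - ∑ i, ν i • g (x i)‖ ≤
        L * ‖(∑ i, ν i • x i) - xstar‖ ^ 2 + B * L * ∑ i, ‖x i - xstar‖ ^ 2 ∧
      ‖(∑ i, ν i • x i) - xstar‖ ^ 2 ≤ (m + 1) * B ^ 2 * ∑ i, ‖x i - xstar‖ ^ 2 :=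
  stmt_14_general n m g xstar A L B R hquad x hx ν hν hB hxhat
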